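/- arXiv:1107.5841 — 2 statements merged into one kernel-verified Lean document; each statement's English description precedes it below -/
import Mathlib

section
/- (Descent lemma for the SCP-DC iteration, Lemma 2.) Let f be ρf-strongly convex, uᵢ be ρᵢᵘ-strongly convex, and vᵢ be ρᵢᵛ-strongly convex (all with parameters ≥ 0) on a nonempty closed convex set Ω ⊆ ℝⁿ. Suppose xᵏ ∈ Ω satisfies uᵢ(xᵏ) − vᵢ(xᵏ) ≤ −(ρᵢᵛ/2)‖xᵏ − xᵏ⁻¹‖² for all i (where xᵏ⁻¹ ∈ Ω), and suppose (xᵏ⁺¹, λᵏ⁺¹) with xᵏ⁺¹ ∈ Ω, λᵏ⁺¹ ≥ 0 satisfies the KKT conditions of the linearized subproblem at xᵏ (with subgradient matrix Ξᵏ ∈ ∂v(xᵏ)): there exist ξ_f ∈ ∂f(xᵏ⁺¹), Ξᵤ ∈ ∂u(xᵏ⁺¹) and w ∈ N_Ω(xᵏ⁺¹) with ξ_f + (Ξᵤ − Ξᵏ)ᵀλᵏ⁺¹ + w = 0, u(xᵏ⁺¹) − v(xᵏ) − Ξᵏ(xᵏ⁺¹ − xᵏ) ≤ 0, and (λᵏ⁺¹)ᵀ[u(xᵏ⁺¹)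 − v(xᵏ) − Ξᵏ(xᵏ⁺¹ − xᵏ)] = 0. Then f(xᵏ) − f(xᵏ⁺¹) ≥ (1/2)(ρf + Σᵢ ρᵢᵘ λᵏ⁺¹ᵢ)‖xᵏ⁺¹ − xᵏ‖² + (1/2) Σᵢ ρᵢᵛ λᵏ⁺¹ᵢ ‖xᵏ − xᵏ⁻¹‖². -/
open scoped RealInnerProductSpace

/-- Convex subdifferential of `f` at `x`. -/
def subdiff {n : ℕ} (f : EuclideanSpace ℝ (Fin n) → ℝ) (x : EuclideanSpace ℝ (Fin n)) :
    Set (EuclideanSpace ℝ (Fin n)) :=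
  {ξ | ∀ y, f y ≥ f x + ⟪ξ, y - x⟫}

/-- Normal cone of `Ω` at `x ∈ Ω`. -/
def normalCone {n : ℕ} (Ω : Set (EuclideanSpace ℝ (Fin n))) (x : EuclideanSpace ℝ (Fin n)) :
    Set (EuclideanSpace ℝ (Fin n)) :=
  {w | ∀ y ∈ Ω, ⟪w, y - x⟫ ≤ 0}

/-- Lemma 2, descent lemma for the SCP-DC iteration. -/
theorem scp_dc_descent (n m : ℕ)
    (f : EuclideanSpace ℝ (Fin n) → ℝ)
    (u v : Fin m → EuclideanSpace ℝ (Fin n) → ℝ)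
    (ρf : ℝ) (ρu ρv : Fin m → ℝ)
    (hρf : 0 ≤ ρf) (hρu : ∀ i, 0 ≤ ρu i) (hρv : ∀ i, 0 ≤ ρv i)
    (Ω : Set (EuclideanSpace ℝ (Fin n))) (hΩ : Convex ℝ Ω) (hΩc : IsClosed Ω)
    (hΩne : Ω.Nonempty)
    -- strong convexity via the subgradient inequalities
    (hf : ∀ x ξ, ξ ∈ subdiff f x → ∀ y, f y ≥ f x + ⟪ξ, y - x⟫ + ρf / 2 * ‖y - x‖ ^ 2)
    (hu : ∀ i, ∀ x ξ, ξ ∈ subdiff (u i) x →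
      ∀ y, u i y ≥ u i x + ⟪ξ, y - x⟫ + ρu i / 2 * ‖y - x‖ ^ 2)
    (hv : ∀ i, ∀ x ξ, ξ ∈ subdiff (v i) x →
      ∀ y, v i y ≥ v i x + ⟪ξ, y - x⟫ + ρv i / 2 * ‖y - x‖ ^ 2)
    (xprev xk xk1 : EuclideanSpace ℝ (Fin n))
    (hxprev : xprev ∈ Ω) (hxk : xk ∈ Ω) (hxk1 : xk1 ∈ Ω)
    (hfeas : ∀ i, u i xk - v i xk ≤ -(ρv i / 2) * ‖xk - xprev‖ ^ 2)
    (Ξ : Fin m → EuclideanSpace ℝ (Fin n)) (hΞ : ∀ i, Ξ i ∈ subdiff (v i) xk)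
    (lam : Fin m → ℝ) (hlam : ∀ i, 0 ≤ lam i)
    (hstat : ∃ ξf ∈ subdiff f xk1, ∃ Ξu : Fin m → EuclideanSpace ℝ (Fin n),
      (∀ i, Ξu i ∈ subdiff (u i) xk1) ∧ ∃ w ∈ normalCone Ω xk1,
        ξf + (∑ i, lam i • (Ξu i - Ξ i)) + w = 0)
    (hlin : ∀ i, u i xk1 - v i xk - ⟪Ξ i, xk1 - xk⟫ ≤ 0)
    (hcomp : ∑ i, lam i * (u i xk1 - v i xk - ⟪Ξ i, xk1 - xk⟫) = 0) :
    f xk - f xk1 ≥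
      1 / 2 * (ρf + ∑ i, ρu i * lam i) * ‖xk1 - xk‖ ^ 2 +
      1 / 2 * ∑ i, ρv i * lam i * ‖xk - xprev‖ ^ 2 := by
  obtain ⟨ξf, hξf, Ξu, hΞu, w, hw, heq⟩ := hstat
  have hwd : ⟪w, xk - xk1⟫ ≤ 0 := hw xk hxk
  have h1 := hf xk1 ξf hξf xk
  have h0 : ⟪ξf + (∑ i, lam i • (Ξu i - Ξ i)) + w, xk - xk1⟫ = (0:ℝ) := by
    rw [heq]; exact inner_zero_left _
  have hexp : ⟪ξf, xk - xk1⟫ +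
      (∑ i, lam i * (⟪Ξu i, xk - xk1⟫ - ⟪Ξ i, xk - xk1⟫)) + ⟪w, xk - xk1⟫ = 0 := by
    rw [← h0]
    simp only [inner_add_left, sum_inner, real_inner_smul_left, inner_sub_left]
  have hkey : ∀ i, lam i * (⟪Ξu i, xk - xk1⟫ - ⟪Ξ i, xk - xk1⟫) ≤
      -(ρu i * lam i / 2 * ‖xk - xk1‖ ^ 2 + ρv i * lam i * ‖xk - xprev‖ ^ 2 / 2 +
        lam i * (u i xk1 - v i xk - ⟪Ξ i, xk1 - xk⟫)) := by
    intro i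
    have hui := hu i xk1 (Ξu i) (hΞu i) xk
    have hfi := hfeas i
    have h3 : ⟪Ξ i, xk1 - xk⟫ = -⟪Ξ i, xk - xk1⟫ := by
      rw [← inner_neg_right]; congr 1; abel
    have m1 := mul_le_mul_of_nonneg_left
      (show u i xk1 + ⟪Ξu i, xk - xk1⟫ + ρu i / 2 * ‖xk - xk1‖ ^ 2 ≤ u i xk from hui)
      (hlam i)
    have m2 := mul_le_mul_of_nonneg_left hfi (hlam i)
    rw [h3]
    nlinarith [m1, m2]
  have hsum : ∑ i, lam i * (⟪Ξu i, xk - xk1⟫ - ⟪Ξ i, xk - xk1⟫) ≤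
      -((∑ i, ρu i * lam i) / 2 * ‖xk - xk1‖ ^ 2 +
        (∑ i, ρv i * lam i * ‖xk - xprev‖ ^ 2) / 2 +
        ∑ i, lam i * (u i xk1 - v i xk - ⟪Ξ i, xk1 - xk⟫)) := by
    refine le_trans (Finset.sum_le_sum fun i _ => hkey i) (le_of_eq ?_)
    rw [Finset.sum_div, Finset.sum_mul, Finset.sum_div,
      ← Finset.sum_add_distrib, ← Finset.sum_add_distrib, ← Finset.sum_neg_distrib]
  have hnrm : ‖xk1 - xk‖ = ‖xk - xk1‖ := norm_sub_rev _ _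
  rw [hnrm]
  linarith [h1, hwd, hexp, hsum, hcomp]
end

section
/- (Monotone decrease of objective values.) Under the hypotheses of the SCP-DC descent lemma, if additionally ρf > 0 or ρᵢᵘ > 0 for some index i with λᵏ⁺¹ᵢ > 0, and xᵏ⁺¹ ≠ xᵏ, then f(xᵏ⁺¹) < f(xᵏ), i.e., the objective value strictly decreases. -/
open scoped RealInnerProductSpace

/-- strict decrease of the objective under strong convexity. -/
theorem scp_dc_strict_decrease (n m : ℕ)
    (f : EuclideanSpace ℝ (Fin n) → ℝ)
    (u v : Fin m → EuclideanSpace ℝ (Fin n) → ℝ)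
    (ρf : ℝ) (ρu ρv : Fin m → ℝ)
    (hρf : 0 ≤ ρf) (hρu : ∀ i, 0 ≤ ρu i) (hρv : ∀ i, 0 ≤ ρv i)
    (Ω : Set (EuclideanSpace ℝ (Fin n))) (hΩ : Convex ℝ Ω) (hΩc : IsClosed Ω)
    (hΩne : Ω.Nonempty)
    -- strong convexity via the subgradient inequalities
    (hf : ∀ x ξ, ξ ∈ subdiff f x → ∀ y, f y ≥ f x + ⟪ξ, y - x⟫ + ρf / 2 * ‖y - x‖ ^ 2)
    (hu : ∀ i, ∀ x ξ, ξ ∈ subdiff (u i) x →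
      ∀ y, u i y ≥ u i x + ⟪ξ, y - x⟫ + ρu i / 2 * ‖y - x‖ ^ 2)
    (hv : ∀ i, ∀ x ξ, ξ ∈ subdiff (v i) x →
      ∀ y, v i y ≥ v i x + ⟪ξ, y - x⟫ + ρv i / 2 * ‖y - x‖ ^ 2)
    (xprev xk xk1 : EuclideanSpace ℝ (Fin n))
    (hxprev : xprev ∈ Ω) (hxk : xk ∈ Ω) (hxk1 : xk1 ∈ Ω)
    (hfeas : ∀ i, u i xk - v i xk ≤ -(ρv i / 2) * ‖xk - xprev‖ ^ 2)
    (Ξ : Fin m → EuclideanSpace ℝ (Fin n)) (hΞ : ∀ i, Ξ i ∈ subdiff (v i) xk)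
    (lam : Fin m → ℝ) (hlam : ∀ i, 0 ≤ lam i)
    (hstat : ∃ ξf ∈ subdiff f xk1, ∃ Ξu : Fin m → EuclideanSpace ℝ (Fin n),
      (∀ i, Ξu i ∈ subdiff (u i) xk1) ∧ ∃ w ∈ normalCone Ω xk1,
        ξf + (∑ i, lam i • (Ξu i - Ξ i)) + w = 0)
    (hlin : ∀ i, u i xk1 - v i xk - ⟪Ξ i, xk1 - xk⟫ ≤ 0)
    (hcomp : ∑ i, lam i * (u i xk1 - v i xk - ⟪Ξ i, xk1 - xk⟫) = 0) :
    (0 < ρf ∨ ∃ i, 0 < ρu i ∧ 0 < lam i) → xk1 ≠ xk → f xk1 < f xk := by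
  rintro hpos hne
  obtain ⟨ξf, hξf, Ξu, hΞu, w, hw, heq⟩ := hstat
  have hd : xk - xk1 ≠ 0 := sub_ne_zero.mpr (Ne.symm hne)
  have hDpos : (0:ℝ) < ‖xk - xk1‖ ^ 2 := by
    have h := norm_pos_iff.mpr hd
    positivity
  set D : ℝ := ‖xk - xk1‖ ^ 2 with hDdef
  set d : EuclideanSpace ℝ (Fin n) := xk - xk1 with hddef
  set S1 : ℝ := ∑ i, lam i * ⟪Ξu i, d⟫ with hS1
  set S2 : ℝ := ∑ i, lam i * ⟪Ξ i, xk1 - xk⟫ with hS2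
  set S3 : ℝ := ∑ i, lam i * (u i xk - u i xk1) with hS3
  set S4 : ℝ := ∑ i, lam i * (u i xk1 - v i xk) with hS4
  set S5 : ℝ := ∑ i, lam i * (ρu i / 2) with hS5
  set S6 : ℝ := ∑ i, lam i * (v i xk - u i xk) with hS6
  -- stationarity after pairing with d
  have hB : ⟪ξf, d⟫ + (S1 + S2) + ⟪w, d⟫ = 0 := by
    have h := congrArg (fun z : EuclideanSpace ℝ (Fin n) => (⟪z, d⟫ : ℝ)) heq
    simp only [inner_add_left, sum_inner, real_inner_smul_left, inner_zero_left] at h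
    have hsplit : ∀ i ∈ Finset.univ (α := Fin m),
        lam i * ⟪Ξu i - Ξ i, d⟫ = lam i * ⟪Ξu i, d⟫ + lam i * ⟪Ξ i, xk1 - xk⟫ := by
      intro i _
      rw [inner_sub_left, show xk1 - xk = -d from (neg_sub xk xk1).symm, inner_neg_right]
      ring
    rw [Finset.sum_congr rfl hsplit, Finset.sum_add_distrib] at h
    linarith [h]
  have hC : ⟪w, d⟫ ≤ 0 := hw xk hxk
  -- complementarity
  have hD' : S2 = S4 := by
    have h := hcomp
    simp only [mul_sub] at h
    rw [Finset.sum_sub_distrib, sub_eq_zero] at h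
    rw [hS2, hS4, ← h]
    exact Finset.sum_congr rfl fun i _ => by rw [mul_sub]
  -- strong convexity of u at xk1
  have hE : S1 ≤ S3 - S5 * D := by
    have h : S1 ≤ ∑ i, (lam i * (u i xk - u i xk1) - lam i * (ρu i / 2) * D) := by
      apply Finset.sum_le_sum
      intro i _
      have h1 := hu i xk1 (Ξu i) (hΞu i) xk
      have h2 : lam i * (⟪Ξu i, d⟫ : ℝ) ≤ lam i * (u i xk - u i xk1 - ρu i / 2 * D) := by
        apply mul_le_mul_of_nonneg_left _ (hlam i)
        simp only [hddef, hDdef] at h1 ⊢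
        linarith
      linarith [h2]
    rw [Finset.sum_sub_distrib] at h
    have h3 : ∑ i, lam i * (ρu i / 2) * D = S5 * D := by
      rw [hS5, Finset.sum_mul]
    linarith [h]
  -- feasibility gives S6 ≥ 0
  have hF : 0 ≤ S6 := by
    apply Finset.sum_nonneg
    intro i _
    apply mul_nonneg (hlam i)
    have h1 := hfeas i
    have h2 : 0 ≤ ρv i / 2 * ‖xk - xprev‖ ^ 2 := by
      have := hρv i
      positivity
    linarith
  have hSum0 : S3 + S4 + S6 = 0 := by
    rw [hS3, hS4, hS6, ← Finset.sum_add_distrib, ← Finset.sum_add_distrib]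
    apply Finset.sum_eq_zero
    intro i _
    ring
  -- S5 nonneg
  have hS5nn : 0 ≤ S5 :=
    Finset.sum_nonneg fun i _ => mul_nonneg (hlam i) (by have := hρu i; linarith)
  -- positivity of coefficient
  have hcoef : 0 < ρf / 2 + S5 := by
    rcases hpos with hρ | ⟨i, hρi, hli⟩
    · linarith
    · have hS5pos : 0 < S5 := by
        apply Finset.sum_pos' (fun j _ => mul_nonneg (hlam j) (by have := hρu j; linarith))
        exact ⟨i, Finset.mem_univ i, mul_pos hli (by linarith)⟩
      linarith
  -- strong convexity of f at xk1
  have hA := hf xk1 ξf hξf xk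
  have hA' : f xk ≥ f xk1 + ⟪ξf, d⟫ + ρf / 2 * D := by
    simpa only [hddef, hDdef] using hA
  have hfinal : f xk1 + (ρf / 2 + S5) * D ≤ f xk := by nlinarith [hB, hC, hD', hE, hF, hSum0]
  nlinarith [mul_pos hcoef hDpos]
end
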